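/- arXiv:2106.11373 — 7 statements merged into one kernel-verified Lean document; each statement's English description precedes it below -/
import Mathlib

section
/- For all f,g ∈ M* and v,w ∈ M, the Lie bracket satisfies [[f,v],[g,w]] = [[f,v]·g, w] − [g, [v,f]·w] in L. -/
/-!
STATEMENT 1: For all f,g ∈ M* and v,w ∈ M, the Lie bracket satisfies
[[f,v],[g,w]] = [[f,v]·g, w] − [g, [v,f]·w] in L.
-/

/-- The dual action of `L` on `M* = Module.Dual F M`: `(x·f)(v) = −f(x·v)`. -/
noncomputable def dualAct {F L M : Type*} [Field F]
    [LieRing L] [LieAlgebra F L]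
    [AddCommGroup M] [Module F M] [LieRingModule L M] [LieModule F L M]
    (x : L) (f : Module.Dual F M) : Module.Dual F M :=
  -(f ∘ₗ (LieModule.toEnd F L M x))

theorem faulkner_bracket_of_brackets
    (F L M : Type*) [Field F] (hchar : (2 : F) ≠ 0)
    [LieRing L] [LieAlgebra F L] [FiniteDimensional F L]
    [AddCommGroup M] [Module F M] [LieRingModule L M] [LieModule F L M]
    [FiniteDimensional F M]
    (b : L →ₗ[F] L →ₗ[F] F)
    (hb_symm : ∀ x y : L, b x y = b y x)
    (hb_inv : ∀ x y z : L, b ⁅x, y⁆ z = b x ⁅y, z⁆)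
    (hb_nd : ∀ x : L, (∀ y : L, b x y = 0) → x = 0)
    (br : Module.Dual F M → M → L)
    (hbr : ∀ (f : Module.Dual F M) (v : M) (x : L), b x (br f v) = -(f ⁅x, v⁆))
    (br' : M → Module.Dual F M → L)
    (hbr' : ∀ (v : M) (f : Module.Dual F M) (x : L), b x (br' v f) = f ⁅x, v⁆) :
    ∀ (f g : Module.Dual F M) (v w : M),
      ⁅br f v, br g w⁆ = br (dualAct (br f v) g) w - br g ⁅br' v f, w⁆ := by
  intro f g v w
  set a := br f v with ha
  -- first: br' v f = - a
  have had : br' v f = -a := by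
    have h0 : br' v f + a = 0 := by
      apply hb_nd
      intro y
      rw [hb_symm]
      rw [map_add, hbr, hbr']
      ring
    exact eq_neg_of_add_eq_zero_left h0
  have key : ⁅a, br g w⁆ - (br (dualAct a g) w - br g ⁅br' v f, w⁆) = 0 := by
    apply hb_nd
    intro y
    rw [hb_symm, map_sub, map_sub, hbr, hbr, ← hb_inv, hbr, had]
    have hda : dualAct a g ⁅y, w⁆ = -(g ⁅a, ⁅y, w⁆⁆) := by
      simp [dualAct]
    rw [hda]
    have hleib : ⁅⁅y, a⁆, w⁆ = ⁅y, ⁅a, w⁆⁆ - ⁅a, ⁅y, w⁆⁆ := by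
      rw [leibniz_lie]; abel
    rw [hleib, neg_lie, lie_neg, map_neg, map_sub]
    ring
  exact sub_eq_zero.mp key
end

section
/- The pair (M*, M) with the triple products {f,v,g} := [f,v]·g and {v,f,w} := [v,f]·w is a generalized Jordan pair; that is, writing D_{f,v}g := {f,v,g} and D_{v,f}w := {v,f,w}, the fundamental identity holds on both sides: D_{f,v}∘D_{g,w} − D_{g,w}∘D_{f,v} = D_{{f,v,g},w} − D_{g,{v,f,w}} as operators on M*, and D_{v,f}∘D_{w,g} − D_{w,g}∘D_{v,f} = D_{{v,f,w},g} − D_{w,{f,v,g}} as operators on M, for all f,g ∈ M*, v,w ∈ M. -/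
theorem faulkner_generalized_jordan_pair
    (F L M : Type*) [Field F] (hchar : (2 : F) ≠ 0)
    [LieRing L] [LieAlgebra F L] [FiniteDimensional F L]
    [AddCommGroup M] [Module F M] [LieRingModule L M] [LieModule F L M]
    [FiniteDimensional F M]
    (b : L →ₗ[F] L →ₗ[F] F)
    (hb_symm : ∀ x y : L, b x y = b y x)
    (hb_inv : ∀ x y z : L, b ⁅x, y⁆ z = b x ⁅y, z⁆)
    (hb_nd : ∀ x : L, (∀ y : L, b x y = 0) → x = 0)
    (br : Module.Dual F M → M → L)
    (hbr : ∀ (f : Module.Dual F M) (v : M) (x : L), b x (br f v) = -(f ⁅x, v⁆))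
    (br' : M → Module.Dual F M → L)
    (hbr' : ∀ (v : M) (f : Module.Dual F M) (x : L), b x (br' v f) = f ⁅x, v⁆)
    -- the triple products: {f,v,g} := [f,v]·g on M*, and {v,f,w} := [v,f]·w on M
    (Tm : Module.Dual F M → M → Module.Dual F M → Module.Dual F M)
    (hTm : ∀ f v g, Tm f v g = dualAct (br f v) g)
    (Tp : M → Module.Dual F M → M → M)
    (hTp : ∀ v f w, Tp v f w = ⁅br' v f, w⁆) :
    -- fundamental identity as operators on M*:
    (∀ (f g h : Module.Dual F M) (v w : M),
        Tm f v (Tm g w h) - Tm g w (Tm f v h)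
          = Tm (Tm f v g) w h - Tm g (Tp v f w) h) ∧
    -- fundamental identity as operators on M:
    (∀ (v w u : M) (f g : Module.Dual F M),
        Tp v f (Tp w g u) - Tp w g (Tp v f u)
          = Tp (Tp v f w) g u - Tp w (Tm f v g) u) := by
  -- nondegeneracy in the second argument
  have hnd : ∀ z : L, (∀ y : L, b y z = 0) → z = 0 := fun z h =>
    hb_nd z (fun y => (hb_symm z y).trans (h y))
  have heq : ∀ z₁ z₂ : L, (∀ y : L, b y z₁ = b y z₂) → z₁ = z₂ := by
    intro z₁ z₂ h
    have h0 : z₁ - z₂ = 0 := hnd _ (fun y => by rw [(b y).map_sub, h y, sub_self])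
    exact sub_eq_zero.mp h0
  -- br' v f = - br f v
  have hbr'_eq : ∀ (v : M) (f : Module.Dual F M), br' v f = -(br f v) := by
    intro v f
    refine heq _ _ (fun y => ?_)
    rw [hbr', (b y).map_neg, hbr, neg_neg]
  -- br g (-z) = -(br g z)
  have br_neg : ∀ (g : Module.Dual F M) (z : M), br g (-z) = -(br g z) := by
    intro g z
    refine heq _ _ (fun y => ?_)
    rw [hbr, (b y).map_neg, hbr, lie_neg, map_neg]
  -- key equivariance of br
  have hC : ∀ (x : L) (f : Module.Dual F M) (v : M),
      ⁅x, br f v⁆ = br (dualAct x f) v + br f ⁅x, v⁆ := by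
    intro x f v
    refine heq _ _ (fun y => ?_)
    rw [← hb_inv y x (br f v), hbr, (b y).map_add, hbr, hbr]
    simp only [dualAct, LinearMap.neg_apply, LinearMap.comp_apply,
      LieModule.toEnd_apply_apply, lie_lie, map_sub]
    ring
  -- dualAct is a Lie module action
  have hD : ∀ (x y : L) (h : Module.Dual F M),
      dualAct ⁅x, y⁆ h = dualAct x (dualAct y h) - dualAct y (dualAct x h) := by
    intro x y h
    ext m
    simp only [dualAct, LinearMap.sub_apply, LinearMap.neg_apply, LinearMap.comp_apply,
      LieModule.toEnd_apply_apply, lie_lie, map_sub, map_neg]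
    ring
  have hDlin : ∀ (a c : L) (h : Module.Dual F M),
      dualAct (a - c) h = dualAct a h - dualAct c h := by
    intro a c h
    ext m
    simp only [dualAct, LinearMap.sub_apply, LinearMap.neg_apply, LinearMap.comp_apply,
      LieModule.toEnd_apply_apply, sub_lie, map_sub]
    ring
  -- bracket of the two derived elements
  have key : ∀ (f g : Module.Dual F M) (v w : M),
      ⁅br f v, br g w⁆ = br (Tm f v g) w - br g (Tp v f w) := by
    intro f g v w
    have h1 : Tp v f w = -⁅br f v, w⁆ := by rw [hTp, hbr'_eq, neg_lie]
    rw [hC (br f v) g w, hTm, h1, br_neg, sub_neg_eq_add]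
  constructor
  · intro f g h v w
    calc Tm f v (Tm g w h) - Tm g w (Tm f v h)
        = dualAct ⁅br f v, br g w⁆ h := by
          rw [hTm, hTm, hTm, hTm, hD]
      _ = Tm (Tm f v g) w h - Tm g (Tp v f w) h := by
          rw [key, hDlin, hTm (Tm f v g) w h, hTm g (Tp v f w) h]
  · intro v w u f g
    have e : ∀ (a : M) (c : Module.Dual F M) (m : M), Tp a c m = -⁅br c a, m⁆ := by
      intro a c m; rw [hTp, hbr'_eq, neg_lie]
    calc Tp v f (Tp w g u) - Tp w g (Tp v f u)
        = ⁅⁅br f v, br g w⁆, u⁆ := by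
          rw [e v f, e w g, e w g, e v f, lie_neg, lie_neg, neg_neg, neg_neg, lie_lie]
      _ = Tp (Tp v f w) g u - Tp w (Tm f v g) u := by
          rw [key, sub_lie, e (Tp v f w) g u, e w (Tm f v g) u]
          abel
end

section
/- The pairing form ⟨f,v⟩ := f(v) on (M*, M) is invariant and symmetric for the triple products: for all f,g ∈ M* and v,w ∈ M, ([f,v]·g)(w) = g([v,f]·w) (invariance) and ([f,v]·g)(w) = ([g,w]·f)(v) (symmetry). -/
theorem faulkner_pairing_invariant_symmetric
    (F L M : Type*) [Field F] (hchar : (2 : F) ≠ 0)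
    [LieRing L] [LieAlgebra F L] [FiniteDimensional F L]
    [AddCommGroup M] [Module F M] [LieRingModule L M] [LieModule F L M]
    [FiniteDimensional F M]
    (b : L →ₗ[F] L →ₗ[F] F)
    (hb_symm : ∀ x y : L, b x y = b y x)
    (hb_inv : ∀ x y z : L, b ⁅x, y⁆ z = b x ⁅y, z⁆)
    (hb_nd : ∀ x : L, (∀ y : L, b x y = 0) → x = 0)
    (br : Module.Dual F M → M → L)
    (hbr : ∀ (f : Module.Dual F M) (v : M) (x : L), b x (br f v) = -(f ⁅x, v⁆))
    (br' : M → Module.Dual F M → L)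
    (hbr' : ∀ (v : M) (f : Module.Dual F M) (x : L), b x (br' v f) = f ⁅x, v⁆) :
    -- invariance: ⟨{f,v,g}, w⟩ = ⟨g, {v,f,w}⟩
    (∀ (f g : Module.Dual F M) (v w : M),
        (dualAct (br f v) g) w = g ⁅br' v f, w⁆) ∧
    -- symmetry: ⟨{f,v,g}, w⟩ = ⟨{g,w,f}, v⟩
    (∀ (f g : Module.Dual F M) (v w : M),
        (dualAct (br f v) g) w = (dualAct (br g w) f) v) := by
  have hact : ∀ (x : L) (g : Module.Dual F M) (w : M),
      (dualAct x g) w = -(g ⁅x, w⁆) := by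
    intro x g w
    simp [dualAct, LieModule.toEnd_apply_apply]
  have hkey : ∀ (f : Module.Dual F M) (v : M), br f v = -(br' v f) := by
    intro f v
    have h : br f v + br' v f = 0 := by
      apply hb_nd
      intro y
      rw [hb_symm]
      simp [hbr, hbr']
    exact eq_neg_of_add_eq_zero_left h
  constructor
  · intro f g v w
    rw [hact, hkey]
    simp
  · intro f g v w
    rw [hact, hact]
    have h1 : g ⁅br f v, w⁆ = -(b (br f v) (br g w)) := by
      rw [hbr g w (br f v), neg_neg]
    have h2 : f ⁅br g w, v⁆ = -(b (br g w) (br f v)) := by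
      rw [hbr f v (br g w), neg_neg]
    rw [h1, h2, hb_symm]
end

section
/- If M is a faithful L-module, then L = instr(L,M); that is, every element of L is a finite sum of elements of the form [f,v] with f ∈ M*, v ∈ M, and moreover the restriction of b to instr(L,M) is nondegenerate. -/
/-!
STATEMENT 6: If M is a faithful L-module, then L = instr(L,M), i.e. every element of
L lies in span{[f,v] : f ∈ M*, v ∈ M}, and the restriction of b to instr(L,M) is
nondegenerate.
-/

theorem faulkner_faithful_instr_eq_top
    (F L M : Type*) [Field F] (hchar : (2 : F) ≠ 0)
    [LieRing L] [LieAlgebra F L] [FiniteDimensional F L]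
    [AddCommGroup M] [Module F M] [LieRingModule L M] [LieModule F L M]
    [FiniteDimensional F M]
    (b : L →ₗ[F] L →ₗ[F] F)
    (hb_symm : ∀ x y : L, b x y = b y x)
    (hb_inv : ∀ x y z : L, b ⁅x, y⁆ z = b x ⁅y, z⁆)
    (hb_nd : ∀ x : L, (∀ y : L, b x y = 0) → x = 0)
    (br : Module.Dual F M → M → L)
    (hbr : ∀ (f : Module.Dual F M) (v : M) (x : L), b x (br f v) = -(f ⁅x, v⁆))
    (br' : M → Module.Dual F M → L)
    (hbr' : ∀ (v : M) (f : Module.Dual F M) (x : L), b x (br' v f) = f ⁅x, v⁆)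
    -- M is a faithful L-module
    (hfaith : ∀ x : L, (∀ v : M, ⁅x, v⁆ = 0) → x = 0)
    (instr : Submodule F L)
    (hinstr : instr
      = Submodule.span F (Set.range fun fv : Module.Dual F M × M => br fv.1 fv.2)) :
    (∀ x : L, x ∈ instr) ∧
    (∀ x ∈ instr, (∀ y ∈ instr, b x y = 0) → x = 0) := by
  -- Key: if b x vanishes on instr, then x = 0.
  have key : ∀ x : L, (∀ y ∈ instr, b x y = 0) → x = 0 := by
    intro x hx
    apply hfaith
    intro v
    have h : ∀ f : Module.Dual F M, f ⁅x, v⁆ = 0 := by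
      intro f
      have hm : br f v ∈ instr := by
        rw [hinstr]
        exact Submodule.subset_span ⟨(f, v), rfl⟩
      have := hx _ hm
      rw [hbr] at this
      exact neg_eq_zero.mp this
    exact (Module.forall_dual_apply_eq_zero_iff F _).mp h
  -- The map L → Dual instr, x ↦ (b x)|_instr, is injective.
  set T : L →ₗ[F] Module.Dual F instr := instr.subtype.dualMap ∘ₗ b with hT
  have hTinj : Function.Injective T := by
    rw [← LinearMap.ker_eq_bot]
    rw [Submodule.eq_bot_iff]
    intro x hx
    apply key
    intro y hy
    have : T x ⟨y, hy⟩ = 0 := by rw [hx]; rfl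
    exact this
  have h1 : Module.finrank F L ≤ Module.finrank F instr := by
    calc Module.finrank F L ≤ Module.finrank F (Module.Dual F instr) :=
          LinearMap.finrank_le_finrank_of_injective hTinj
      _ = Module.finrank F instr := Subspace.dual_finrank_eq
  have htop : instr = ⊤ :=
    Submodule.eq_top_of_finrank_eq (le_antisymm (Submodule.finrank_le instr) h1)
  refine ⟨fun x => htop ▸ Submodule.mem_top, fun x _ hx => key x hx⟩
end

section
/- Let (L, M, b) be as in the context with M faithful, and let (V, ⟨·,·⟩) = ((M*, M), pairing ⟨f,v⟩ = f(v)) be the associated generalized Jordan pair with triple products {f,v,g} := [f,v]·g and {v,f,w} := [v,f]·w. Then the map sending an automorphism (φ⁻, φ⁺) of (V, ⟨·,·⟩) to the pair (φ₀, φ⁺), where φ₀ is conjugation by (φ⁻, φ⁺) on L = instr(L,M), is a group isomorphism from the group Aut(V, ⟨·,·⟩) of pair automorphisms preserving ⟨·,·⟩ onto the group Aut(L, M, b) of pairs (ψ₀, ψ⁺) with ψ₀ a b-preserving Lie algebra automorphism of L and ψ⁺ ∈ GL(M) satisfying ψ⁺(x·v) = ψ₀(x)·ψ⁺(v). -/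
section

variable {F L M : Type*} [Field F]
  [LieRing L] [LieAlgebra F L]
  [AddCommGroup M] [Module F M] [LieRingModule L M] [LieModule F L M]

/-- Membership in `Aut(V, ⟨·,·⟩)`: the pair `(φ⁻, φ⁺)` preserves both triple products
`{f,v,g} = [f,v]·g`, `{v,f,w} = [v,f]·w`, and the pairing `⟨f,v⟩ = f(v)`. -/
noncomputable def IsPairAut (br : Module.Dual F M → M → L) (br' : M → Module.Dual F M → L)
    (p : (Module.Dual F M ≃ₗ[F] Module.Dual F M) × (M ≃ₗ[F] M)) : Prop :=
  (∀ (f g : Module.Dual F M) (v : M),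
      p.1 (dualAct (br f v) g) = dualAct (br (p.1 f) (p.2 v)) (p.1 g)) ∧
  (∀ (v w : M) (f : Module.Dual F M),
      p.2 ⁅br' v f, w⁆ = ⁅br' (p.2 v) (p.1 f), p.2 w⁆) ∧
  (∀ (f : Module.Dual F M) (v : M), (p.1 f) (p.2 v) = f v)

/-- Membership in `Aut(L, M, b)`: `ψ₀` is a `b`-preserving Lie algebra automorphism of
`L` and `ψ⁺ ∈ GL(M)` satisfies `ψ⁺(x·v) = ψ₀(x)·ψ⁺(v)`. -/
def IsModAut (b : L →ₗ[F] L →ₗ[F] F)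
    (q : (L ≃ₗ[F] L) × (M ≃ₗ[F] M)) : Prop :=
  (∀ x y : L, q.1 ⁅x, y⁆ = ⁅q.1 x, q.1 y⁆) ∧
  (∀ x y : L, b (q.1 x) (q.1 y) = b x y) ∧
  (∀ (x : L) (v : M), q.2 ⁅x, v⁆ = ⁅q.1 x, q.2 v⁆)

end

section AuxProofs

variable {F L M : Type*} [Field F]
  [LieRing L] [LieAlgebra F L] [FiniteDimensional F L]
  [AddCommGroup M] [Module F M] [LieRingModule L M] [LieModule F L M]
  [FiniteDimensional F M]

theorem aux_unique (hfaith : ∀ x : L, (∀ v : M, ⁅x, v⁆ = 0) → x = 0)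
    {y y' : L} (h : ∀ w : M, (⁅y, w⁆ : M) = ⁅y', w⁆) : y = y' := by
  have h0 : ∀ v : M, ⁅y - y', v⁆ = (0 : M) := fun v => by
    rw [sub_lie, h, sub_self]
  have := hfaith _ h0
  rwa [sub_eq_zero] at this

theorem aux_mem_span (b : L →ₗ[F] L →ₗ[F] F)
    (hb_nd : ∀ x : L, (∀ y : L, b x y = 0) → x = 0)
    (br' : M → Module.Dual F M → L)
    (hbr' : ∀ (v : M) (f : Module.Dual F M) (x : L), b x (br' v f) = f ⁅x, v⁆)
    (hfaith : ∀ x : L, (∀ v : M, ⁅x, v⁆ = 0) → x = 0) (x : L) :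
    x ∈ Submodule.span F (Set.range fun p : M × Module.Dual F M => br' p.1 p.2) := by
  rw [← Subspace.forall_mem_dualAnnihilator_apply_eq_zero_iff]
  intro φ hφ
  have hφ' := (Submodule.mem_dualAnnihilator φ).mp hφ
  have hinj : Function.Injective (b : L →ₗ[F] Module.Dual F L) := by
    rw [← LinearMap.ker_eq_bot, LinearMap.ker_eq_bot']
    intro m hm
    exact hb_nd m fun y => by rw [hm]; rfl
  have hsurj : Function.Surjective (b : L →ₗ[F] Module.Dual F L) :=
    (LinearMap.injective_iff_surjective_of_finrank_eq_finrank
      (Subspace.dual_finrank_eq (V := L)).symm).mp hinj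
  obtain ⟨x₀, hx₀⟩ := hsurj φ
  have hx00 : x₀ = 0 := by
    apply hfaith
    intro v
    rw [← Module.forall_dual_apply_eq_zero_iff F]
    intro f
    have hmem : br' v f ∈ Set.range fun p : M × Module.Dual F M => br' p.1 p.2 :=
      ⟨(v, f), rfl⟩
    have h0 : φ (br' v f) = 0 := hφ' _ (Submodule.subset_span hmem)
    calc f ⁅x₀, v⁆ = b x₀ (br' v f) := (hbr' v f x₀).symm
      _ = φ (br' v f) := by rw [hx₀]
      _ = 0 := h0
  have : φ = 0 := by rw [← hx₀, hx00, map_zero]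
  rw [this]
  rfl

theorem aux_exists_conj (b : L →ₗ[F] L →ₗ[F] F)
    (hb_nd : ∀ x : L, (∀ y : L, b x y = 0) → x = 0)
    (br' : M → Module.Dual F M → L)
    (hbr' : ∀ (v : M) (f : Module.Dual F M) (x : L), b x (br' v f) = f ⁅x, v⁆)
    (hfaith : ∀ x : L, (∀ v : M, ⁅x, v⁆ = 0) → x = 0)
    (φm : Module.Dual F M ≃ₗ[F] Module.Dual F M) (φp : M ≃ₗ[F] M)
    (h2 : ∀ (v w : M) (f : Module.Dual F M),
      φp ⁅br' v f, w⁆ = ⁅br' (φp v) (φm f), φp w⁆)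
    (x : L) : ∃ y : L, ∀ w : M, φp ⁅x, w⁆ = ⁅y, φp w⁆ := by
  induction aux_mem_span b hb_nd br' hbr' hfaith x using Submodule.span_induction with
  | mem z hz =>
    obtain ⟨⟨v, f⟩, rfl⟩ := hz
    exact ⟨br' (φp v) (φm f), fun w => h2 v w f⟩
  | zero => exact ⟨0, fun w => by rw [zero_lie, map_zero, zero_lie]⟩
  | add x y hx hy ihx ihy =>
    obtain ⟨yx, hyx⟩ := ihx
    obtain ⟨yy, hyy⟩ := ihy
    exact ⟨yx + yy, fun w => by rw [add_lie, map_add, hyx, hyy, add_lie]⟩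
  | smul a x hx ih =>
    obtain ⟨y, hy⟩ := ih
    exact ⟨a • y, fun w => by rw [smul_lie, map_smul, hy, smul_lie]⟩

end AuxProofs

theorem faulkner_automorphism_groups_isomorphic
    (F L M : Type*) [Field F] (hchar : (2 : F) ≠ 0)
    [LieRing L] [LieAlgebra F L] [FiniteDimensional F L]
    [AddCommGroup M] [Module F M] [LieRingModule L M] [LieModule F L M]
    [FiniteDimensional F M]
    (b : L →ₗ[F] L →ₗ[F] F)
    (hb_symm : ∀ x y : L, b x y = b y x)
    (hb_inv : ∀ x y z : L, b ⁅x, y⁆ z = b x ⁅y, z⁆)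
    (hb_nd : ∀ x : L, (∀ y : L, b x y = 0) → x = 0)
    (br : Module.Dual F M → M → L)
    (hbr : ∀ (f : Module.Dual F M) (v : M) (x : L), b x (br f v) = -(f ⁅x, v⁆))
    (br' : M → Module.Dual F M → L)
    (hbr' : ∀ (v : M) (f : Module.Dual F M) (x : L), b x (br' v f) = f ⁅x, v⁆)
    -- M is faithful
    (hfaith : ∀ x : L, (∀ v : M, ⁅x, v⁆ = 0) → x = 0) :
    ∃ T : {p : (Module.Dual F M ≃ₗ[F] Module.Dual F M) × (M ≃ₗ[F] M) // IsPairAut br br' p}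
        ≃ {q : (L ≃ₗ[F] L) × (M ≃ₗ[F] M) // IsModAut b q},
      -- T keeps the second component: (φ⁻, φ⁺) ↦ (φ₀, φ⁺)
      (∀ p, (T p).val.2 = p.val.2) ∧
      -- φ₀ is conjugation by (φ⁻, φ⁺) on L: φ⁺ ∘ x ∘ (φ⁺)⁻¹ = φ₀(x) as operators on M
      (∀ p (x : L) (v : M), p.val.2 ⁅x, v⁆ = ⁅(T p).val.1 x, p.val.2 v⁆) ∧
      -- T is multiplicative, i.e. a group isomorphism
      (∀ (p₁ p₂ : {p // IsPairAut br br' p}) (h : IsPairAut br br' (p₁.val * p₂.val)),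
          (T ⟨p₁.val * p₂.val, h⟩).val = (T p₁).val * (T p₂).val) := by
  classical
  -- the conjugation map φ₀, obtained by choice
  have hex : ∀ p : {p : (Module.Dual F M ≃ₗ[F] Module.Dual F M) × (M ≃ₗ[F] M) //
      IsPairAut br br' p}, ∀ x : L, ∃ y : L, ∀ w : M, p.val.2 ⁅x, w⁆ = ⁅y, p.val.2 w⁆ :=
    fun p x => aux_exists_conj b hb_nd br' hbr' hfaith p.val.1 p.val.2 p.prop.2.1 x
  choose ψ hψ using hex
  have huniq : ∀ p x (y : L), (∀ w : M, p.val.2 ⁅x, w⁆ = ⁅y, p.val.2 w⁆) → y = ψ p x := by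
    intro p x y hy
    apply aux_unique hfaith
    intro w
    obtain ⟨w', rfl⟩ := p.val.2.surjective w
    rw [← hy w', hψ p x w']
  -- inverses of pair automorphisms are pair automorphisms
  have hinv' : ∀ (pm : Module.Dual F M ≃ₗ[F] Module.Dual F M) (pp : M ≃ₗ[F] M),
      IsPairAut br br' (pm, pp) → IsPairAut br br' (pm.symm, pp.symm) := by
    rintro pm pp ⟨h1, h2, h3⟩
    refine ⟨?_, ?_, ?_⟩
    · intro f g v
      apply pm.injective
      show pm (pm.symm (dualAct (br f v) g))
        = pm (dualAct (br (pm.symm f) (pp.symm v)) (pm.symm g))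
      rw [pm.apply_symm_apply, h1 (pm.symm f) (pm.symm g) (pp.symm v),
        pm.apply_symm_apply, pm.apply_symm_apply, pp.apply_symm_apply]
    · intro v w f
      apply pp.injective
      show pp (pp.symm ⁅br' v f, w⁆) = pp ⁅br' (pp.symm v) (pm.symm f), pp.symm w⁆
      rw [pp.apply_symm_apply, h2 (pp.symm v) (pp.symm w) (pm.symm f),
        pm.apply_symm_apply, pp.apply_symm_apply, pp.apply_symm_apply]
    · intro f v
      show (pm.symm f) (pp.symm v) = f v
      conv_rhs => rw [← pm.apply_symm_apply f, ← pp.apply_symm_apply v]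
      exact (h3 (pm.symm f) (pp.symm v)).symm
  have hinvaut : ∀ p : {p // IsPairAut br br' p}, IsPairAut br br' p.val⁻¹ :=
    fun p => hinv' p.val.1 p.val.2 (by
      have := p.prop
      exact this)
  -- linearity of ψ
  have hEadd : ∀ p (x y : L), ψ p (x + y) = ψ p x + ψ p y := fun p x y =>
    (huniq p (x + y) (ψ p x + ψ p y) (fun w => by
      rw [add_lie, map_add, hψ p x w, hψ p y w, add_lie])).symm
  have hEsmul : ∀ p (a : F) (x : L), ψ p (a • x) = a • ψ p x := fun p a x =>
    (huniq p (a • x) (a • ψ p x) (fun w => by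
      rw [smul_lie, map_smul, hψ p x w, smul_lie])).symm
  have hEzero : ∀ p, ψ p 0 = 0 := fun p =>
    (huniq p 0 0 (fun w => by rw [zero_lie, map_zero, zero_lie])).symm
  -- inversion of ψ
  have hEleft : ∀ p (x : L), ψ ⟨p.val⁻¹, hinvaut p⟩ (ψ p x) = x := by
    intro p x
    refine (huniq ⟨p.val⁻¹, hinvaut p⟩ (ψ p x) x ?_).symm
    intro w
    show p.val.2.symm ⁅ψ p x, w⁆ = ⁅x, p.val.2.symm w⁆
    apply p.val.2.injective
    rw [p.val.2.apply_symm_apply, hψ p x (p.val.2.symm w), p.val.2.apply_symm_apply]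
  have hEright : ∀ p (x : L), ψ p (ψ ⟨p.val⁻¹, hinvaut p⟩ x) = x := by
    intro p x
    refine (huniq p (ψ ⟨p.val⁻¹, hinvaut p⟩ x) x ?_).symm
    intro w
    have h := hψ ⟨p.val⁻¹, hinvaut p⟩ x (p.val.2 w)
    rw [show ((⟨p.val⁻¹, hinvaut p⟩ : {p // IsPairAut br br' p}).val.2 : M ≃ₗ[F] M)
        = p.val.2.symm from rfl] at h
    rw [p.val.2.symm_apply_apply] at h
    rw [← h, p.val.2.apply_symm_apply]
  -- the conjugation automorphism of L
  let E : {p // IsPairAut br br' p} → (L ≃ₗ[F] L) := fun p =>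
    { toFun := ψ p
      map_add' := hEadd p
      map_smul' := hEsmul p
      invFun := ψ ⟨p.val⁻¹, hinvaut p⟩
      left_inv := hEleft p
      right_inv := hEright p }
  -- (E p, p⁺) is a module automorphism
  have hmod : ∀ p, IsModAut b (E p, p.val.2) := by
    intro p
    refine ⟨?_, ?_, ?_⟩
    · intro x y
      show ψ p ⁅x, y⁆ = ⁅ψ p x, ψ p y⁆
      refine (huniq p ⁅x, y⁆ ⁅ψ p x, ψ p y⁆ ?_).symm
      intro w
      have hb1 : (⁅⁅x, y⁆, w⁆ : M) = ⁅x, ⁅y, w⁆⁆ - ⁅y, ⁅x, w⁆⁆ :=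
        eq_sub_of_add_eq (leibniz_lie x y w).symm
      have hb2 : (⁅⁅ψ p x, ψ p y⁆, p.val.2 w⁆ : M)
          = ⁅ψ p x, ⁅ψ p y, p.val.2 w⁆⁆ - ⁅ψ p y, ⁅ψ p x, p.val.2 w⁆⁆ :=
        eq_sub_of_add_eq (leibniz_lie _ _ _).symm
      rw [hb1, map_sub, hψ p x ⁅y, w⁆, hψ p y ⁅x, w⁆, hψ p y w, hψ p x w, hb2]
    · intro x y
      show b (ψ p x) (ψ p y) = b x y
      induction aux_mem_span b hb_nd br' hbr' hfaith y using Submodule.span_induction with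
      | mem z hz =>
        obtain ⟨⟨v, f⟩, rfl⟩ := hz
        have hz' : ψ p (br' v f) = br' (p.val.2 v) (p.val.1 f) :=
          (huniq p (br' v f) _ (fun w => p.prop.2.1 v w f)).symm
        rw [hz', hbr', hbr', ← hψ p x v, p.prop.2.2 f ⁅x, v⁆]
      | zero => rw [hEzero p, map_zero, map_zero]
      | add u v hu hv ihu ihv =>
        rw [hEadd p u v, map_add, map_add, ihu, ihv]
      | smul a u hu ihu =>
        rw [hEsmul p a u, map_smul, map_smul, ihu]
    · intro x v
      exact hψ p x v
  -- backwards: a module automorphism gives a pair automorphism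
  have hUaut : ∀ q : {q // IsModAut b q},
      IsPairAut br br' (q.val.2.symm.dualMap, q.val.2) := by
    intro q
    obtain ⟨hL, hB, hC⟩ := q.prop
    have hC' : ∀ (x : L) (w : M),
        q.val.2.symm ⁅x, w⁆ = ⁅q.val.1.symm x, q.val.2.symm w⁆ := by
      intro x w
      apply q.val.2.injective
      rw [q.val.2.apply_symm_apply, hC, q.val.1.apply_symm_apply, q.val.2.apply_symm_apply]
    have hnd' : ∀ y : L, (∀ z : L, b z y = 0) → y = 0 :=
      fun y h => hb_nd y fun z => (hb_symm y z).trans (h z)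
    have hBz : ∀ (z y : L), b z (q.val.1 y) = b (q.val.1.symm z) y := by
      intro z y
      conv_lhs => rw [← q.val.1.apply_symm_apply z]
      exact hB _ y
    have key1 : ∀ (f : Module.Dual F M) (v : M),
        br (q.val.2.symm.dualMap f) (q.val.2 v) = q.val.1 (br f v) := by
      intro f v
      have h0 : ∀ z : L,
          b z (br (q.val.2.symm.dualMap f) (q.val.2 v) - q.val.1 (br f v)) = 0 := by
        intro z
        rw [map_sub, hbr, hBz, hbr, LinearEquiv.dualMap_apply, hC' z (q.val.2 v),
          q.val.2.symm_apply_apply, sub_self]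
      exact sub_eq_zero.mp (hnd' _ h0)
    have key2 : ∀ (v : M) (f : Module.Dual F M),
        br' (q.val.2 v) (q.val.2.symm.dualMap f) = q.val.1 (br' v f) := by
      intro v f
      have h0 : ∀ z : L,
          b z (br' (q.val.2 v) (q.val.2.symm.dualMap f) - q.val.1 (br' v f)) = 0 := by
        intro z
        rw [map_sub, hbr', hBz, hbr', LinearEquiv.dualMap_apply, hC' z (q.val.2 v),
          q.val.2.symm_apply_apply, sub_self]
      exact sub_eq_zero.mp (hnd' _ h0)
    refine ⟨?_, ?_, ?_⟩
    · intro f g v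
      show q.val.2.symm.dualMap (dualAct (br f v) g)
        = dualAct (br (q.val.2.symm.dualMap f) (q.val.2 v)) (q.val.2.symm.dualMap g)
      rw [key1 f v]
      generalize br f v = x
      refine LinearMap.ext fun w => ?_
      show (dualAct x g) (q.val.2.symm w) = (dualAct (q.val.1 x) (q.val.2.symm.dualMap g)) w
      show (-(g ∘ₗ (LieModule.toEnd F L M x))) (q.val.2.symm w)
        = (-((q.val.2.symm.dualMap g) ∘ₗ (LieModule.toEnd F L M (q.val.1 x)))) w
      simp only [LinearMap.neg_apply, LinearMap.comp_apply, LieModule.toEnd_apply_apply,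
        LinearEquiv.dualMap_apply]
      rw [hC' (q.val.1 x) w, q.val.1.symm_apply_apply]
    · intro v w f
      show q.val.2 ⁅br' v f, w⁆ = ⁅br' (q.val.2 v) (q.val.2.symm.dualMap f), q.val.2 w⁆
      rw [key2 v f]
      exact hC _ _
    · intro f v
      show q.val.2.symm.dualMap f (q.val.2 v) = f v
      rw [LinearEquiv.dualMap_apply, q.val.2.symm_apply_apply]
  -- assemble the equivalence
  refine ⟨{ toFun := fun p => ⟨(E p, p.val.2), hmod p⟩
            invFun := fun q => ⟨(q.val.2.symm.dualMap, q.val.2), hUaut q⟩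
            left_inv := ?_
            right_inv := ?_ }, fun p => rfl, fun p x v => hψ p x v, ?_⟩
  · intro p
    apply Subtype.ext
    refine Prod.ext ?_ rfl
    refine LinearEquiv.ext fun f => ?_
    refine LinearMap.ext fun w => ?_
    obtain ⟨w', rfl⟩ := p.val.2.surjective w
    show p.val.2.symm.dualMap f (p.val.2 w') = p.val.1 f (p.val.2 w')
    rw [LinearEquiv.dualMap_apply, p.val.2.symm_apply_apply, p.prop.2.2 f w']
  · intro q
    apply Subtype.ext
    refine Prod.ext ?_ rfl
    refine LinearEquiv.ext fun x => ?_
    show ψ ⟨(q.val.2.symm.dualMap, q.val.2), hUaut q⟩ x = q.val.1 x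
    exact (huniq ⟨(q.val.2.symm.dualMap, q.val.2), hUaut q⟩ x (q.val.1 x)
      (fun w => q.prop.2.2 x w)).symm
  · intro p₁ p₂ h
    refine Prod.ext ?_ rfl
    refine LinearEquiv.ext fun x => ?_
    show ψ ⟨p₁.val * p₂.val, h⟩ x = ψ p₁ (ψ p₂ x)
    refine (huniq ⟨p₁.val * p₂.val, h⟩ x (ψ p₁ (ψ p₂ x)) ?_).symm
    intro w
    show p₁.val.2 (p₂.val.2 ⁅x, w⁆) = ⁅ψ p₁ (ψ p₂ x), p₁.val.2 (p₂.val.2 w)⁆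
    rw [hψ p₂ x w, hψ p₁ (ψ p₂ x) (p₂.val.2 w)]
end

section
/- Let (V₁, ⟨·,·⟩₁) and (V₂, ⟨·,·⟩₂) be generalized Jordan pairs over F with invariant symmetric bilinear forms. On the pair (V₁⁻ ⊗ V₂⁻, V₁⁺ ⊗ V₂⁺), define triple products by {x₁⊗x₂, y₁⊗y₂, z₁⊗z₂} := {x₁,y₁,z₁} ⊗ ⟨x₂,y₂⟩z₂ + ⟨x₁,y₁⟩z₁ ⊗ {x₂,y₂,z₂} (for both signs σ = ±, where ⟨x_i, y_i⟩ denotes the form applied to the V⁻-element and the V⁺-element among x_i, y_i), and define ⟨f₁⊗f₂, v₁⊗v₂⟩ := ⟨f₁,v₁⟩₁⟨f₂,v₂⟩₂. Then this is a generalized Jordan pair (the fundamental identity holds) and the form ⟨·,·⟩ is invariant and symmetric; it is nondegenerate if ⟨·,·⟩₁ and ⟨·,·⟩₂ are nondegenerate (and the spaces are finite-dimensional). -/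
open TensorProduct

/-!
STATEMENT 16: The tensor product of two generalized Jordan pairs with invariant
symmetric bilinear forms, with triple products
{x₁⊗x₂, y₁⊗y₂, z₁⊗z₂} = {x₁,y₁,z₁} ⊗ ⟨x₂,y₂⟩z₂ + ⟨x₁,y₁⟩z₁ ⊗ {x₂,y₂,z₂}
and form ⟨f₁⊗f₂, v₁⊗v₂⟩ = ⟨f₁,v₁⟩₁⟨f₂,v₂⟩₂, is a generalized Jordan pair with an
invariant symmetric form, nondegenerate whenever both factors' forms are
(in finite dimensions).
-/

set_option maxHeartbeats 4000000 in
theorem gjp_tensor_product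
    (F Vm₁ Vp₁ Vm₂ Vp₂ : Type*) [Field F] (hchar : (2 : F) ≠ 0)
    [AddCommGroup Vm₁] [Module F Vm₁] [AddCommGroup Vp₁] [Module F Vp₁]
    [AddCommGroup Vm₂] [Module F Vm₂] [AddCommGroup Vp₂] [Module F Vp₂]
    -- first generalized Jordan pair with invariant symmetric form
    (Tm₁ : Vm₁ →ₗ[F] Vp₁ →ₗ[F] Vm₁ →ₗ[F] Vm₁)
    (Tp₁ : Vp₁ →ₗ[F] Vm₁ →ₗ[F] Vp₁ →ₗ[F] Vp₁)
    (hfm₁ : ∀ (f g : Vm₁) (v w : Vp₁),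
      Tm₁ f v ∘ₗ Tm₁ g w - Tm₁ g w ∘ₗ Tm₁ f v = Tm₁ (Tm₁ f v g) w - Tm₁ g (Tp₁ v f w))
    (hfp₁ : ∀ (v w : Vp₁) (f g : Vm₁),
      Tp₁ v f ∘ₗ Tp₁ w g - Tp₁ w g ∘ₗ Tp₁ v f = Tp₁ (Tp₁ v f w) g - Tp₁ w (Tm₁ f v g))
    (p₁ : Vm₁ →ₗ[F] Vp₁ →ₗ[F] F)
    (hp₁_inv : ∀ (f g : Vm₁) (v w : Vp₁), p₁ (Tm₁ f v g) w = p₁ g (Tp₁ v f w))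
    (hp₁_symm : ∀ (f g : Vm₁) (v w : Vp₁), p₁ (Tm₁ f v g) w = p₁ (Tm₁ g w f) v)
    -- second generalized Jordan pair with invariant symmetric form
    (Tm₂ : Vm₂ →ₗ[F] Vp₂ →ₗ[F] Vm₂ →ₗ[F] Vm₂)
    (Tp₂ : Vp₂ →ₗ[F] Vm₂ →ₗ[F] Vp₂ →ₗ[F] Vp₂)
    (hfm₂ : ∀ (f g : Vm₂) (v w : Vp₂),
      Tm₂ f v ∘ₗ Tm₂ g w - Tm₂ g w ∘ₗ Tm₂ f v = Tm₂ (Tm₂ f v g) w - Tm₂ g (Tp₂ v f w))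
    (hfp₂ : ∀ (v w : Vp₂) (f g : Vm₂),
      Tp₂ v f ∘ₗ Tp₂ w g - Tp₂ w g ∘ₗ Tp₂ v f = Tp₂ (Tp₂ v f w) g - Tp₂ w (Tm₂ f v g))
    (p₂ : Vm₂ →ₗ[F] Vp₂ →ₗ[F] F)
    (hp₂_inv : ∀ (f g : Vm₂) (v w : Vp₂), p₂ (Tm₂ f v g) w = p₂ g (Tp₂ v f w))
    (hp₂_symm : ∀ (f g : Vm₂) (v w : Vp₂), p₂ (Tm₂ f v g) w = p₂ (Tm₂ g w f) v)
    -- the tensor product pair: trilinear maps and form determined on pure tensors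
    (Sm : (Vm₁ ⊗[F] Vm₂) →ₗ[F] (Vp₁ ⊗[F] Vp₂) →ₗ[F] (Vm₁ ⊗[F] Vm₂) →ₗ[F] (Vm₁ ⊗[F] Vm₂))
    (hSm : ∀ (x₁ z₁ : Vm₁) (y₁ : Vp₁) (x₂ z₂ : Vm₂) (y₂ : Vp₂),
      Sm (x₁ ⊗ₜ[F] x₂) (y₁ ⊗ₜ[F] y₂) (z₁ ⊗ₜ[F] z₂)
        = p₂ x₂ y₂ • (Tm₁ x₁ y₁ z₁ ⊗ₜ[F] z₂) + p₁ x₁ y₁ • (z₁ ⊗ₜ[F] Tm₂ x₂ y₂ z₂))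
    (Sp : (Vp₁ ⊗[F] Vp₂) →ₗ[F] (Vm₁ ⊗[F] Vm₂) →ₗ[F] (Vp₁ ⊗[F] Vp₂) →ₗ[F] (Vp₁ ⊗[F] Vp₂))
    (hSp : ∀ (x₁ z₁ : Vp₁) (y₁ : Vm₁) (x₂ z₂ : Vp₂) (y₂ : Vm₂),
      Sp (x₁ ⊗ₜ[F] x₂) (y₁ ⊗ₜ[F] y₂) (z₁ ⊗ₜ[F] z₂)
        = p₂ y₂ x₂ • (Tp₁ x₁ y₁ z₁ ⊗ₜ[F] z₂) + p₁ y₁ x₁ • (z₁ ⊗ₜ[F] Tp₂ x₂ y₂ z₂))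
    (P : (Vm₁ ⊗[F] Vm₂) →ₗ[F] (Vp₁ ⊗[F] Vp₂) →ₗ[F] F)
    (hP : ∀ (f₁ : Vm₁) (f₂ : Vm₂) (v₁ : Vp₁) (v₂ : Vp₂),
      P (f₁ ⊗ₜ[F] f₂) (v₁ ⊗ₜ[F] v₂) = p₁ f₁ v₁ * p₂ f₂ v₂) :
    -- the tensor product is a generalized Jordan pair (fundamental identity)
    (∀ (f g : Vm₁ ⊗[F] Vm₂) (v w : Vp₁ ⊗[F] Vp₂),
        Sm f v ∘ₗ Sm g w - Sm g w ∘ₗ Sm f v = Sm (Sm f v g) w - Sm g (Sp v f w)) ∧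
    (∀ (v w : Vp₁ ⊗[F] Vp₂) (f g : Vm₁ ⊗[F] Vm₂),
        Sp v f ∘ₗ Sp w g - Sp w g ∘ₗ Sp v f = Sp (Sp v f w) g - Sp w (Sm f v g)) ∧
    -- the form P is invariant
    (∀ (f g : Vm₁ ⊗[F] Vm₂) (v w : Vp₁ ⊗[F] Vp₂), P (Sm f v g) w = P g (Sp v f w)) ∧
    -- the form P is symmetric
    (∀ (f g : Vm₁ ⊗[F] Vm₂) (v w : Vp₁ ⊗[F] Vp₂), P (Sm f v g) w = P (Sm g w f) v) ∧
    -- P is nondegenerate whenever p₁, p₂ are (in finite dimensions)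
    ([FiniteDimensional F Vm₁] → [FiniteDimensional F Vp₁] →
     [FiniteDimensional F Vm₂] → [FiniteDimensional F Vp₂] →
     (∀ f : Vm₁, (∀ v : Vp₁, p₁ f v = 0) → f = 0) →
     (∀ v : Vp₁, (∀ f : Vm₁, p₁ f v = 0) → v = 0) →
     (∀ f : Vm₂, (∀ v : Vp₂, p₂ f v = 0) → f = 0) →
     (∀ v : Vp₂, (∀ f : Vm₂, p₂ f v = 0) → v = 0) →
     (∀ u : Vm₁ ⊗[F] Vm₂, (∀ w : Vp₁ ⊗[F] Vp₂, P u w = 0) → u = 0) ∧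
     (∀ w : Vp₁ ⊗[F] Vp₂, (∀ u : Vm₁ ⊗[F] Vm₂, P u w = 0) → w = 0)) := by
  -- pointwise versions of the fundamental identities of the factors
  have Hm₁ : ∀ (f g : Vm₁) (v w : Vp₁) (u : Vm₁),
      Tm₁ (Tm₁ f v g) w u
        = Tm₁ f v (Tm₁ g w u) - Tm₁ g w (Tm₁ f v u) + Tm₁ g (Tp₁ v f w) u := by
    intro f g v w u
    have h := congrFun (congrArg DFunLike.coe (hfm₁ f g v w)) u
    simp only [LinearMap.sub_apply, LinearMap.comp_apply] at h
    linear_combination (norm := module) -h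
  have Hm₂ : ∀ (f g : Vm₂) (v w : Vp₂) (u : Vm₂),
      Tm₂ (Tm₂ f v g) w u
        = Tm₂ f v (Tm₂ g w u) - Tm₂ g w (Tm₂ f v u) + Tm₂ g (Tp₂ v f w) u := by
    intro f g v w u
    have h := congrFun (congrArg DFunLike.coe (hfm₂ f g v w)) u
    simp only [LinearMap.sub_apply, LinearMap.comp_apply] at h
    linear_combination (norm := module) -h
  have Hp₁ : ∀ (v w : Vp₁) (f g : Vm₁) (u : Vp₁),
      Tp₁ (Tp₁ v f w) g u
        = Tp₁ v f (Tp₁ w g u) - Tp₁ w g (Tp₁ v f u) + Tp₁ w (Tm₁ f v g) u := by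
    intro v w f g u
    have h := congrFun (congrArg DFunLike.coe (hfp₁ v w f g)) u
    simp only [LinearMap.sub_apply, LinearMap.comp_apply] at h
    linear_combination (norm := module) -h
  have Hp₂ : ∀ (v w : Vp₂) (f g : Vm₂) (u : Vp₂),
      Tp₂ (Tp₂ v f w) g u
        = Tp₂ v f (Tp₂ w g u) - Tp₂ w g (Tp₂ v f u) + Tp₂ w (Tm₂ f v g) u := by
    intro v w f g u
    have h := congrFun (congrArg DFunLike.coe (hfp₂ v w f g)) u
    simp only [LinearMap.sub_apply, LinearMap.comp_apply] at h
    linear_combination (norm := module) -h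
  -- pure-tensor case of the fundamental identity for Sm
  have key₁ : ∀ (f₁ g₁ u₁ : Vm₁) (f₂ g₂ u₂ : Vm₂) (v₁ w₁ : Vp₁) (v₂ w₂ : Vp₂),
      Sm (f₁ ⊗ₜ[F] f₂) (v₁ ⊗ₜ[F] v₂) (Sm (g₁ ⊗ₜ[F] g₂) (w₁ ⊗ₜ[F] w₂) (u₁ ⊗ₜ[F] u₂))
        - Sm (g₁ ⊗ₜ[F] g₂) (w₁ ⊗ₜ[F] w₂) (Sm (f₁ ⊗ₜ[F] f₂) (v₁ ⊗ₜ[F] v₂) (u₁ ⊗ₜ[F] u₂))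
        = Sm (Sm (f₁ ⊗ₜ[F] f₂) (v₁ ⊗ₜ[F] v₂) (g₁ ⊗ₜ[F] g₂)) (w₁ ⊗ₜ[F] w₂) (u₁ ⊗ₜ[F] u₂)
          - Sm (g₁ ⊗ₜ[F] g₂) (Sp (v₁ ⊗ₜ[F] v₂) (f₁ ⊗ₜ[F] f₂) (w₁ ⊗ₜ[F] w₂)) (u₁ ⊗ₜ[F] u₂) := by
    intro f₁ g₁ u₁ f₂ g₂ u₂ v₁ w₁ v₂ w₂
    simp only [hSm, hSp, map_add, map_smul, LinearMap.add_apply, LinearMap.smul_apply,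
      hp₁_inv, hp₂_inv, Hm₁, Hm₂, sub_tmul, add_tmul, tmul_sub, tmul_add, smul_sub, smul_add]
    module
  -- pure-tensor case of the fundamental identity for Sp
  have key₂ : ∀ (v₁ w₁ u₁ : Vp₁) (v₂ w₂ u₂ : Vp₂) (f₁ g₁ : Vm₁) (f₂ g₂ : Vm₂),
      Sp (v₁ ⊗ₜ[F] v₂) (f₁ ⊗ₜ[F] f₂) (Sp (w₁ ⊗ₜ[F] w₂) (g₁ ⊗ₜ[F] g₂) (u₁ ⊗ₜ[F] u₂))
        - Sp (w₁ ⊗ₜ[F] w₂) (g₁ ⊗ₜ[F] g₂) (Sp (v₁ ⊗ₜ[F] v₂) (f₁ ⊗ₜ[F] f₂) (u₁ ⊗ₜ[F] u₂))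
        = Sp (Sp (v₁ ⊗ₜ[F] v₂) (f₁ ⊗ₜ[F] f₂) (w₁ ⊗ₜ[F] w₂)) (g₁ ⊗ₜ[F] g₂) (u₁ ⊗ₜ[F] u₂)
          - Sp (w₁ ⊗ₜ[F] w₂) (Sm (f₁ ⊗ₜ[F] f₂) (v₁ ⊗ₜ[F] v₂) (g₁ ⊗ₜ[F] g₂)) (u₁ ⊗ₜ[F] u₂) := by
    intro v₁ w₁ u₁ v₂ w₂ u₂ f₁ g₁ f₂ g₂
    simp only [hSm, hSp, map_add, map_smul, LinearMap.add_apply, LinearMap.smul_apply,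
      hp₁_inv, hp₂_inv, Hp₁, Hp₂, sub_tmul, add_tmul, tmul_sub, tmul_add, smul_sub, smul_add]
    module
  refine ⟨?_, ?_, ?_, ?_, ?_⟩
  · intro f g v w
    refine LinearMap.ext fun u => ?_
    simp only [LinearMap.sub_apply, LinearMap.comp_apply]
    induction f using TensorProduct.induction_on with
    | zero => simp
    | add x y hx hy =>
      simp only [map_add, LinearMap.add_apply]
      linear_combination (norm := module) hx + hy
    | tmul f₁ f₂ =>
      induction g using TensorProduct.induction_on with
      | zero => simp
      | add x y hx hy =>
        simp only [map_add, LinearMap.add_apply]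
        linear_combination (norm := module) hx + hy
      | tmul g₁ g₂ =>
        induction v using TensorProduct.induction_on with
        | zero => simp
        | add x y hx hy =>
          simp only [map_add, LinearMap.add_apply]
          linear_combination (norm := module) hx + hy
        | tmul v₁ v₂ =>
          induction w using TensorProduct.induction_on with
          | zero => simp
          | add x y hx hy =>
            simp only [map_add, LinearMap.add_apply]
            linear_combination (norm := module) hx + hy
          | tmul w₁ w₂ =>
            induction u using TensorProduct.induction_on with
            | zero => simp
            | add x y hx hy =>
              simp only [map_add, LinearMap.add_apply]
              linear_combination (norm := module) hx + hy
            | tmul u₁ u₂ => exact key₁ f₁ g₁ u₁ f₂ g₂ u₂ v₁ w₁ v₂ w₂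
  · intro v w f g
    refine LinearMap.ext fun u => ?_
    simp only [LinearMap.sub_apply, LinearMap.comp_apply]
    induction v using TensorProduct.induction_on with
    | zero => simp
    | add x y hx hy =>
      simp only [map_add, LinearMap.add_apply]
      linear_combination (norm := module) hx + hy
    | tmul v₁ v₂ =>
      induction w using TensorProduct.induction_on with
      | zero => simp
      | add x y hx hy =>
        simp only [map_add, LinearMap.add_apply]
        linear_combination (norm := module) hx + hy
      | tmul w₁ w₂ =>
        induction f using TensorProduct.induction_on with
        | zero => simp
        | add x y hx hy =>
          simp only [map_add, LinearMap.add_apply]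
          linear_combination (norm := module) hx + hy
        | tmul f₁ f₂ =>
          induction g using TensorProduct.induction_on with
          | zero => simp
          | add x y hx hy =>
            simp only [map_add, LinearMap.add_apply]
            linear_combination (norm := module) hx + hy
          | tmul g₁ g₂ =>
            induction u using TensorProduct.induction_on with
            | zero => simp
            | add x y hx hy =>
              simp only [map_add, LinearMap.add_apply]
              linear_combination (norm := module) hx + hy
            | tmul u₁ u₂ => exact key₂ v₁ w₁ u₁ v₂ w₂ u₂ f₁ g₁ f₂ g₂
  · intro f g v w
    induction f using TensorProduct.induction_on with
    | zero => simp
    | add x y hx hy => simp only [map_add, LinearMap.add_apply, hx, hy]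
    | tmul f₁ f₂ =>
      induction g using TensorProduct.induction_on with
      | zero => simp
      | add x y hx hy => simp only [map_add, LinearMap.add_apply, hx, hy]
      | tmul g₁ g₂ =>
        induction v using TensorProduct.induction_on with
        | zero => simp
        | add x y hx hy => simp only [map_add, LinearMap.add_apply, hx, hy]
        | tmul v₁ v₂ =>
          induction w using TensorProduct.induction_on with
          | zero => simp
          | add x y hx hy => simp only [map_add, LinearMap.add_apply, hx, hy]
          | tmul w₁ w₂ =>
            simp only [hSm, hSp, map_add, map_smul, LinearMap.add_apply, LinearMap.smul_apply,
              hP, hp₁_inv, hp₂_inv, smul_eq_mul]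
  · intro f g v w
    induction f using TensorProduct.induction_on with
    | zero => simp
    | add x y hx hy => simp only [map_add, LinearMap.add_apply, hx, hy]
    | tmul f₁ f₂ =>
      induction g using TensorProduct.induction_on with
      | zero => simp
      | add x y hx hy => simp only [map_add, LinearMap.add_apply, hx, hy]
      | tmul g₁ g₂ =>
        induction v using TensorProduct.induction_on with
        | zero => simp
        | add x y hx hy => simp only [map_add, LinearMap.add_apply, hx, hy]
        | tmul v₁ v₂ =>
          induction w using TensorProduct.induction_on with
          | zero => simp
          | add x y hx hy => simp only [map_add, LinearMap.add_apply, hx, hy]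
          | tmul w₁ w₂ =>
            simp only [hSm, map_add, map_smul, LinearMap.add_apply, LinearMap.smul_apply,
              hP, smul_eq_mul]
            rw [hp₁_symm f₁ g₁ v₁ w₁, hp₂_symm f₂ g₂ v₂ w₂]
            ring
  · intro _ _ _ _ h1l h1r h2l h2r
    classical
    have inj₁ : Function.Injective ⇑p₁ := by
      intro a b hab
      have h : a - b = 0 := h1l _ (fun v => by simp [map_sub, LinearMap.sub_apply, hab])
      exact sub_eq_zero.mp h
    have inj₂ : Function.Injective ⇑p₂ := by
      intro a b hab
      have h : a - b = 0 := h2l _ (fun v => by simp [map_sub, LinearMap.sub_apply, hab])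
      exact sub_eq_zero.mp h
    have inj₁' : Function.Injective ⇑p₁.flip := by
      intro a b hab
      have h : a - b = 0 := h1r _ (fun f => by
        have : p₁.flip (a - b) f = 0 := by simp [map_sub, LinearMap.sub_apply, hab]
        simpa using this)
      exact sub_eq_zero.mp h
    have inj₂' : Function.Injective ⇑p₂.flip := by
      intro a b hab
      have h : a - b = 0 := h2r _ (fun f => by
        have : p₂.flip (a - b) f = 0 := by simp [map_sub, LinearMap.sub_apply, hab]
        simpa using this)
      exact sub_eq_zero.mp h
    have hmap : Function.Injective ⇑(TensorProduct.map p₁ p₂) := by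
      have heq : TensorProduct.map p₁ p₂
          = (LinearMap.rTensor (Module.Dual F Vp₂) p₁) ∘ₗ (LinearMap.lTensor Vm₁ p₂) :=
        (LinearMap.rTensor_comp_lTensor Vm₁ p₁ p₂).symm
      rw [heq, LinearMap.coe_comp]
      exact (Module.Flat.rTensor_preserves_injective_linearMap p₁ inj₁).comp
        (Module.Flat.lTensor_preserves_injective_linearMap p₂ inj₂)
    have hmap' : Function.Injective ⇑(TensorProduct.map p₁.flip p₂.flip) := by
      have heq : TensorProduct.map p₁.flip p₂.flip
          = (LinearMap.rTensor (Module.Dual F Vm₂) p₁.flip) ∘ₗ (LinearMap.lTensor Vp₁ p₂.flip) :=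
        (LinearMap.rTensor_comp_lTensor Vp₁ p₁.flip p₂.flip).symm
      rw [heq, LinearMap.coe_comp]
      exact (Module.Flat.rTensor_preserves_injective_linearMap p₁.flip inj₁').comp
        (Module.Flat.lTensor_preserves_injective_linearMap p₂.flip inj₂')
    have hdd₁ : Function.Injective ⇑(TensorProduct.dualDistrib F Vp₁ Vp₂) :=
      (TensorProduct.dualDistribEquivOfBasis (Module.Basis.ofVectorSpace F Vp₁)
        (Module.Basis.ofVectorSpace F Vp₂)).injective
    have hdd₂ : Function.Injective ⇑(TensorProduct.dualDistrib F Vm₁ Vm₂) :=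
      (TensorProduct.dualDistribEquivOfBasis (Module.Basis.ofVectorSpace F Vm₁)
        (Module.Basis.ofVectorSpace F Vm₂)).injective
    have hPeq : ∀ (u : Vm₁ ⊗[F] Vm₂) (w : Vp₁ ⊗[F] Vp₂),
        TensorProduct.dualDistrib F Vp₁ Vp₂ (TensorProduct.map p₁ p₂ u) w = P u w := by
      intro u w
      induction u using TensorProduct.induction_on with
      | zero => simp
      | add x y hx hy => simp only [map_add, LinearMap.add_apply, hx, hy]
      | tmul u₁ u₂ =>
        induction w using TensorProduct.induction_on with
        | zero => simp
        | add x y hx hy => simp only [map_add, LinearMap.add_apply, hx, hy]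
        | tmul w₁ w₂ =>
          simp [TensorProduct.map_tmul, TensorProduct.dualDistrib_apply, hP]
    have hPeq' : ∀ (w : Vp₁ ⊗[F] Vp₂) (u : Vm₁ ⊗[F] Vm₂),
        TensorProduct.dualDistrib F Vm₁ Vm₂ (TensorProduct.map p₁.flip p₂.flip w) u = P u w := by
      intro w u
      induction w using TensorProduct.induction_on with
      | zero => simp
      | add x y hx hy => simp only [map_add, LinearMap.add_apply, hx, hy]
      | tmul w₁ w₂ =>
        induction u using TensorProduct.induction_on with
        | zero => simp
        | add x y hx hy => simp only [map_add, LinearMap.add_apply, hx, hy]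
        | tmul u₁ u₂ =>
          simp [TensorProduct.map_tmul, TensorProduct.dualDistrib_apply, hP,
            LinearMap.flip_apply]
    constructor
    · intro u hu
      have h0 : TensorProduct.map p₁ p₂ u = 0 := by
        apply hdd₁
        rw [map_zero]
        exact LinearMap.ext fun w => by
          simpa [LinearMap.zero_apply] using (hPeq u w).trans (hu w)
      have := hmap (by rw [h0, map_zero] : TensorProduct.map p₁ p₂ u = TensorProduct.map p₁ p₂ 0)
      exact this
    · intro w hw
      have h0 : TensorProduct.map p₁.flip p₂.flip w = 0 := by
        apply hdd₂
        rw [map_zero]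
        exact LinearMap.ext fun u => by
          simpa [LinearMap.zero_apply] using (hPeq' w u).trans (hw u)
      have := hmap' (by rw [h0, map_zero] :
        TensorProduct.map p₁.flip p₂.flip w = TensorProduct.map p₁.flip p₂.flip 0)
      exact this
end

section
/- Let (V, ⟨·,·⟩) be a generalized Jordan pair over F with an invariant symmetric bilinear form ⟨·,·⟩ : V⁻ × V⁺ → F, and let λ ∈ F. Define shifted triple products by {f,v,g}_{[λ]} := {f,v,g} + λ⟨f,v⟩g for f,g ∈ V⁻, v ∈ V⁺, and {v,f,w}_{[λ]} := {v,f,w} + λ⟨f,v⟩w for v,w ∈ V⁺, f ∈ V⁻. Then V^{[λ]} := (V⁻, V⁺) with these shifted products is a generalized Jordan pair, ⟨·,·⟩ is invariant and symmetric for V^{[λ]}, and a pair of linear bijections (φ⁻, φ⁺) with ⟨φ⁻f, φ⁺v⟩ = ⟨f,v⟩ is an automorphism of V if and only if it is an automorphism of V^{[λ]}. -/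
/-!
STATEMENT 18: Tensor shift. For a generalized Jordan pair V with invariant symmetric
form ⟨·,·⟩ and λ ∈ F, the shifted products {x,y,z}_{[λ]} := {x,y,z} + λ⟨·,·⟩z again
give a generalized Jordan pair V^{[λ]}, ⟨·,·⟩ stays invariant and symmetric, and a
form-preserving pair of linear bijections is an automorphism of V iff it is an
automorphism of V^{[λ]}.

The shifted products are {f,v,g}_{[λ]} = Tm f v g + (λ * p f v) • g on V⁻ and
{v,f,w}_{[λ]} = Tp v f w + (λ * p f v) • w on V⁺.
-/

theorem gjp_tensor_shift
    (F Vm Vp : Type*) [Field F] (hchar : (2 : F) ≠ 0)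
    [AddCommGroup Vm] [Module F Vm] [AddCommGroup Vp] [Module F Vp]
    (Tm : Vm →ₗ[F] Vp →ₗ[F] Vm →ₗ[F] Vm)
    (Tp : Vp →ₗ[F] Vm →ₗ[F] Vp →ₗ[F] Vp)
    (hfm : ∀ (f g : Vm) (v w : Vp),
      Tm f v ∘ₗ Tm g w - Tm g w ∘ₗ Tm f v = Tm (Tm f v g) w - Tm g (Tp v f w))
    (hfp : ∀ (v w : Vp) (f g : Vm),
      Tp v f ∘ₗ Tp w g - Tp w g ∘ₗ Tp v f = Tp (Tp v f w) g - Tp w (Tm f v g))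
    (p : Vm →ₗ[F] Vp →ₗ[F] F)
    (hp_inv : ∀ (f g : Vm) (v w : Vp), p (Tm f v g) w = p g (Tp v f w))
    (hp_symm : ∀ (f g : Vm) (v w : Vp), p (Tm f v g) w = p (Tm g w f) v)
    (lam : F)
    -- the shifted triple products
    (TmS : Vm → Vp → Vm → Vm)
    (hTmS : ∀ (f g : Vm) (v : Vp), TmS f v g = Tm f v g + (lam * p f v) • g)
    (TpS : Vp → Vm → Vp → Vp)
    (hTpS : ∀ (v w : Vp) (f : Vm), TpS v f w = Tp v f w + (lam * p f v) • w) :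
    -- V^{[λ]} is a generalized Jordan pair (fundamental identity, both sides)
    (∀ (f g h : Vm) (v w : Vp),
        TmS f v (TmS g w h) - TmS g w (TmS f v h)
          = TmS (TmS f v g) w h - TmS g (TpS v f w) h) ∧
    (∀ (v w u : Vp) (f g : Vm),
        TpS v f (TpS w g u) - TpS w g (TpS v f u)
          = TpS (TpS v f w) g u - TpS w (TmS f v g) u) ∧
    -- ⟨·,·⟩ is invariant for V^{[λ]}
    (∀ (f g : Vm) (v w : Vp), p (TmS f v g) w = p g (TpS v f w)) ∧
    -- ⟨·,·⟩ is symmetric for V^{[λ]}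
    (∀ (f g : Vm) (v w : Vp), p (TmS f v g) w = p (TmS g w f) v) ∧
    -- a form-preserving pair of bijections is an automorphism of V iff of V^{[λ]}
    (∀ (φm : Vm ≃ₗ[F] Vm) (φp : Vp ≃ₗ[F] Vp),
        (∀ (f : Vm) (v : Vp), p (φm f) (φp v) = p f v) →
        (((∀ (f g : Vm) (v : Vp), φm (Tm f v g) = Tm (φm f) (φp v) (φm g)) ∧
          (∀ (v w : Vp) (f : Vm), φp (Tp v f w) = Tp (φp v) (φm f) (φp w)))
          ↔
         ((∀ (f g : Vm) (v : Vp), φm (TmS f v g) = TmS (φm f) (φp v) (φm g)) ∧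
          (∀ (v w : Vp) (f : Vm), φp (TpS v f w) = TpS (φp v) (φm f) (φp w))))) := by
  have hfm' : ∀ (f g : Vm) (v w : Vp) (h : Vm),
      Tm f v (Tm g w h) - Tm g w (Tm f v h) = Tm (Tm f v g) w h - Tm g (Tp v f w) h := by
    intro f g v w h
    have := congrFun (congrArg DFunLike.coe (hfm f g v w)) h
    simpa using this
  have hfp' : ∀ (v w : Vp) (f g : Vm) (u : Vp),
      Tp v f (Tp w g u) - Tp w g (Tp v f u) = Tp (Tp v f w) g u - Tp w (Tm f v g) u := by
    intro v w f g u
    have := congrFun (congrArg DFunLike.coe (hfp v w f g)) u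
    simpa using this
  refine ⟨?_, ?_, ?_, ?_, ?_⟩
  · intro f g h v w
    have key := hfm' f g v w h
    have hi := hp_inv f g v w
    simp only [hTmS, hTpS, map_add, map_smul, LinearMap.add_apply, LinearMap.smul_apply,
      smul_eq_mul]
    rw [hi]
    linear_combination (norm := module) key
  · intro v w u f g
    have key := hfp' v w f g u
    have hi := hp_inv f g v w
    simp only [hTmS, hTpS, map_add, map_smul, LinearMap.add_apply, LinearMap.smul_apply,
      smul_eq_mul]
    rw [hi]
    linear_combination (norm := module) key
  · intro f g v w
    simp only [hTmS, hTpS, map_add, map_smul, LinearMap.add_apply, LinearMap.smul_apply,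
      smul_eq_mul, hp_inv f g v w]
  · intro f g v w
    simp only [hTmS, map_add, map_smul, LinearMap.add_apply, LinearMap.smul_apply,
      smul_eq_mul, hp_symm f g v w]
    ring
  · intro φm φp hform
    constructor
    · rintro ⟨h1, h2⟩
      refine ⟨?_, ?_⟩
      · intro f g v
        simp [hTmS, h1, hform]
      · intro v w f
        simp [hTpS, h2, hform]
    · rintro ⟨h1, h2⟩
      refine ⟨?_, ?_⟩
      · intro f g v
        have := h1 f g v
        simp only [hTmS, map_add, map_smul, hform] at this
        exact add_right_cancel this
      · intro v w f
        have := h2 v w f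
        simp only [hTpS, map_add, map_smul, hform] at this
        exact add_right_cancel this
end
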